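/- Let k be a field and m ≥ 1 a natural number. For the category OI of finite sets of natural numbers and strictly order-preserving injections, let P_m denote the projective OI-module sending a finite set S to the free k-vector space on the set of strictly order-preserving injections from {1,…,m} to S, and let Σ denote the shift functor given by precomposition with the self-embedding of OI that adds one new largest element to every object. Then there is an isomorphism of OI-modules Σ P_m ≅ P_m ⊕ P_{m−1}. -/

import Mathlib

open CategoryTheory CategoryTheory.Limits

/-- Objects of the category `OI` : finite sets of natural numbers. -/
structure OIcat where
  carrier : Finset ℕ

/-- The category `OI` : finite sets of natural numbers with strictly order-preserving
injections between them. -/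
instance : Category OIcat where
  Hom S T := { f : S.carrier → T.carrier // StrictMono f }
  id S := ⟨id, fun _ _ h => h⟩
  comp f g := ⟨g.1 ∘ f.1, g.2.comp f.2⟩

/-- A natural number larger than every element of `S`, playing the role of the new
largest element `∗`. -/
def newPt (S : OIcat) : ℕ := S.carrier.sup id + 1

theorem lt_newPt {S : OIcat} {a : ℕ} (h : a ∈ S.carrier) : a < newPt S := by
  have := Finset.le_sup (f := id) h
  simp only [id_eq, newPt] at this ⊢
  omega

theorem newPt_not_mem (S : OIcat) : newPt S ∉ S.carrier := fun h => lt_irrefl _ (lt_newPt h)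

/-- The underlying function of the extension of `f : S ⟶ T` to `S ⊔ {∗} → T ⊔ {∗}`. -/
def embMap {S T : OIcat} (f : S ⟶ T)
    (x : {a : ℕ // a ∈ insert (newPt S) S.carrier}) :
    {a : ℕ // a ∈ insert (newPt T) T.carrier} :=
  if h : x.1 ∈ S.carrier then
    ⟨(f.1 ⟨x.1, h⟩).1, Finset.mem_insert_of_mem (f.1 ⟨x.1, h⟩).2⟩
  else ⟨newPt T, Finset.mem_insert_self _ _⟩

theorem embMap_val_mem {S T : OIcat} (f : S ⟶ T) (x) (h : x.1 ∈ S.carrier) :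
    (embMap f x).1 = (f.1 ⟨x.1, h⟩).1 := by
  rw [embMap, dif_pos h]

theorem embMap_val_not_mem {S T : OIcat} (f : S ⟶ T) (x) (h : x.1 ∉ S.carrier) :
    (embMap f x).1 = newPt T := by
  rw [embMap, dif_neg h]

theorem embMap_strictMono {S T : OIcat} (f : S ⟶ T) : StrictMono (embMap f) := by
  intro x y hxy
  have hlt : x.1 < y.1 := hxy
  rw [← Subtype.coe_lt_coe]
  by_cases hx : x.1 ∈ S.carrier <;> by_cases hy : y.1 ∈ S.carrier
  · rw [embMap_val_mem f x hx, embMap_val_mem f y hy]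
    exact Subtype.coe_lt_coe.mpr (f.2 (Subtype.mk_lt_mk.mpr hlt))
  · rw [embMap_val_mem f x hx, embMap_val_not_mem f y hy]
    exact lt_newPt (f.1 ⟨x.1, hx⟩).2
  · have hx' := x.2
    rw [Finset.mem_insert] at hx'
    have hxv : x.1 = newPt S := hx'.resolve_right hx
    rw [hxv] at hlt
    exact absurd hlt (not_lt_of_gt (lt_newPt hy))
  · have hx' := x.2
    have hy' := y.2
    rw [Finset.mem_insert] at hx' hy'
    rw [hx'.resolve_right hx, hy'.resolve_right hy] at hlt
    exact absurd hlt (lt_irrefl _)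

/-- The self-embedding `ι : OI → OI`, sending `S` to `S ⊔ {∗}` where `∗` is a new element
larger than all elements of `S` (re-encoded as a natural number), and extending every
morphism by `∗ ↦ ∗`. -/
def selfEmb : OIcat ⥤ OIcat where
  obj S := ⟨insert (newPt S) S.carrier⟩
  map f := ⟨embMap f, embMap_strictMono f⟩
  map_id S := by
    apply Subtype.ext
    funext x
    apply Subtype.ext
    by_cases h : x.1 ∈ S.carrier
    · rw [embMap_val_mem (𝟙 S) x h]
      rfl
    · rw [embMap_val_not_mem (𝟙 S) x h]
      have hx' := x.2
      rw [Finset.mem_insert] at hx'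
      exact (hx'.resolve_right h).symm
  map_comp {S T U} f g := by
    apply Subtype.ext
    funext x
    apply Subtype.ext
    show (embMap (f ≫ g) x).1 = (embMap g (embMap f x)).1
    by_cases h : x.1 ∈ S.carrier
    · rw [embMap_val_mem (f ≫ g) x h]
      have h2 : (embMap f x).1 ∈ T.carrier := by
        rw [embMap_val_mem f x h]; exact (f.1 ⟨x.1, h⟩).2
      rw [embMap_val_mem g _ h2]
      have heq : (⟨(embMap f x).1, h2⟩ : {a : ℕ // a ∈ T.carrier}) = f.1 ⟨x.1, h⟩ :=
        Subtype.ext (embMap_val_mem f x h)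
      show ((g.1 (f.1 ⟨x.1, h⟩)) : ℕ) = ((g.1 ⟨(embMap f x).1, h2⟩) : ℕ)
      exact congrArg (fun t => ((g.1 t) : ℕ)) heq.symm
    · rw [embMap_val_not_mem (f ≫ g) x h]
      have h2 : (embMap f x).1 ∉ T.carrier := by
        rw [embMap_val_not_mem f x h]; exact newPt_not_mem T
      rw [embMap_val_not_mem g _ h2]

/-- The object `{1, …, m}` of `OI`. -/
def stdObj (m : ℕ) : OIcat := ⟨Finset.Icc 1 m⟩

/-- The projective `OI`-module `P_m = k[OI({1,…,m}, -)]`, sending a finite set `S` to the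
free `k`-vector space on the set of strictly order-preserving injections `{1,…,m} → S`. -/
noncomputable def Pmod (k : Type) [Field k] (m : ℕ) : OIcat ⥤ ModuleCat.{0} k :=
  coyoneda.obj (Opposite.op (stdObj m)) ⋙ ModuleCat.free k

instance (k : Type) [Field k] : HasFiniteBiproducts (OIcat ⥤ ModuleCat.{0} k) :=
  HasFiniteBiproducts.of_hasFiniteProducts

instance (k : Type) [Field k] : HasBinaryBiproducts (OIcat ⥤ ModuleCat.{0} k) :=
  hasBinaryBiproducts_of_finite_biproducts _


/-!
An `OI`-map `{1,…,m} → S ⊔ {∗}` either misses `∗`, and is then an `OI`-map into `S`, or hits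
`∗`, necessarily at `m`, and is then an `OI`-map `{1,…,m-1} → S` extended by `m ↦ ∗`. Hence
`OI({1,…,m}, ι -)` is the coproduct of `OI({1,…,m}, -)` and `OI({1,…,m-1}, -)` as
`Type`-valued functors, and linearizing, which preserves coproducts since the free-module
functor is a left adjoint, turns this coproduct into the biproduct `P_m ⊞ P_{m-1}`.
-/

section

variable {C D E : Type*} [Category C] [Category D] [Category E]

def isColimitBinaryCofanOfIsColimitApp {X Y Z : C ⥤ D} (f : X ⟶ Z) (g : Y ⟶ Z)
    (h : ∀ c, IsColimit (BinaryCofan.mk (f.app c) (g.app c))) :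
    IsColimit (BinaryCofan.mk f g) :=
  evaluationJointlyReflectsColimits _ fun c =>
    (isColimitMapCoconeBinaryCofanEquiv ((evaluation C D).obj c) f g).symm (h c)

noncomputable def mapIsoBiprodOfIsColimit [HasZeroMorphisms E] (G : D ⥤ E)
    [PreservesColimitsOfShape (Discrete WalkingPair) G] {X Y Z : D} {f : X ⟶ Z} {g : Y ⟶ Z}
    [HasBinaryBiproduct (G.obj X) (G.obj Y)] (h : IsColimit (BinaryCofan.mk f g)) :
    G.obj Z ≅ G.obj X ⊞ G.obj Y :=
  (mapIsColimitOfPreservesOfIsColimit G f g h).coconePointUniqueUpToIso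
    (BinaryBiproduct.isColimit _ _)

end

namespace OIcat

theorem hom_ext {S T : OIcat} {f g : S ⟶ T} (h : ∀ x, (f.1 x : ℕ) = g.1 x) : f = g :=
  Subtype.ext (funext fun x => Subtype.ext (h x))

theorem mem_of_mem_selfEmb_of_ne {S : OIcat} {a : ℕ} (ha : a ∈ (selfEmb.obj S).carrier)
    (hne : a ≠ newPt S) : a ∈ S.carrier :=
  (Finset.mem_insert.mp ha).resolve_left hne

theorem le_newPt_of_mem_selfEmb {S : OIcat} {a : ℕ} (ha : a ∈ (selfEmb.obj S).carrier) :
    a ≤ newPt S := by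
  rcases Finset.mem_insert.mp ha with rfl | ha
  · exact le_rfl
  · exact (lt_newPt ha).le

theorem apply_mem_of_lt {A S : OIcat} (g : A ⟶ selfEmb.obj S) {x y : A.carrier} (hxy : x < y) :
    (g.1 x : ℕ) ∈ S.carrier :=
  mem_of_mem_selfEmb_of_ne (g.1 x).2
    ((show (g.1 x : ℕ) < g.1 y from g.2 hxy).trans_le (le_newPt_of_mem_selfEmb (g.1 y).2)).ne

def toSelfEmb (S : OIcat) : S ⟶ selfEmb.obj S :=
  ⟨fun x => ⟨x, Finset.mem_insert_of_mem x.2⟩, fun _ _ h => h⟩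

def corestrict {A S : OIcat} (g : A ⟶ selfEmb.obj S) (hg : ∀ x, (g.1 x : ℕ) ∈ S.carrier) :
    A ⟶ S :=
  ⟨fun x => ⟨g.1 x, hg x⟩, fun _ _ h => g.2 h⟩

theorem toSelfEmb_comp_selfEmb_map_apply {A S : OIcat} (g : A ⟶ S) (x : A.carrier) :
    ((toSelfEmb A ≫ selfEmb.map g).1 x : ℕ) = g.1 x :=
  embMap_val_mem g _ x.2

theorem toSelfEmb_comp_selfEmb_map_injective (A S : OIcat) :
    Function.Injective fun g : A ⟶ S => toSelfEmb A ≫ selfEmb.map g := fun g g' h =>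
  hom_ext fun x => by
    rw [← toSelfEmb_comp_selfEmb_map_apply g, ← toSelfEmb_comp_selfEmb_map_apply g']
    exact congrArg (fun f : A ⟶ selfEmb.obj S => (f.1 x : ℕ)) h

theorem toSelfEmb_comp_selfEmb_map_corestrict {A S : OIcat} (g : A ⟶ selfEmb.obj S)
    (hg : ∀ x, (g.1 x : ℕ) ∈ S.carrier) :
    toSelfEmb A ≫ selfEmb.map (corestrict g hg) = g :=
  hom_ext fun x => toSelfEmb_comp_selfEmb_map_apply _ x

theorem mem_stdObj {m a : ℕ} : a ∈ (stdObj m).carrier ↔ 1 ≤ a ∧ a ≤ m :=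
  Finset.mem_Icc

def stdTop {m : ℕ} (hm : 1 ≤ m) : (stdObj m).carrier :=
  ⟨m, mem_stdObj.mpr ⟨hm, le_rfl⟩⟩

theorem lt_stdTop {m : ℕ} (hm : 1 ≤ m) {x : (stdObj m).carrier} (hx : (x : ℕ) ≠ m) :
    x < stdTop hm :=
  show (x : ℕ) < m from lt_of_le_of_ne (mem_stdObj.mp x.2).2 hx

def stdPredToStd (m : ℕ) : stdObj (m - 1) ⟶ stdObj m :=
  ⟨fun x => ⟨x, mem_stdObj.mpr
      ⟨(mem_stdObj.mp x.2).1, (mem_stdObj.mp x.2).2.trans (m.sub_le 1)⟩⟩, fun _ _ h => h⟩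

theorem stdPredToStd_apply_lt {m : ℕ} (x : (stdObj (m - 1)).carrier) :
    ((stdPredToStd m).1 x : ℕ) < m := by
  have := mem_stdObj.mp x.2
  change (x : ℕ) < m
  omega

theorem newPt_stdObj_pred {m : ℕ} (hm : 1 ≤ m) : newPt (stdObj (m - 1)) = m := by
  have hsup : (stdObj (m - 1)).carrier.sup id = m - 1 := by
    refine le_antisymm (Finset.sup_le fun a ha => (mem_stdObj.mp ha).2) ?_
    rcases Nat.lt_or_ge m 2 with h | h
    · omega
    · exact Finset.le_sup (f := id) (mem_stdObj.mpr ⟨by omega, le_rfl⟩)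
  rw [newPt, hsup]
  omega

theorem selfEmb_obj_stdObj_pred {m : ℕ} (hm : 1 ≤ m) :
    (selfEmb.obj (stdObj (m - 1))).carrier = (stdObj m).carrier := by
  ext a
  change a ∈ insert (newPt (stdObj (m - 1))) (stdObj (m - 1)).carrier ↔ _
  rw [Finset.mem_insert, mem_stdObj, mem_stdObj, newPt_stdObj_pred hm]
  omega

/-- The identity of underlying sets: `ι {1,…,m-1} = {1,…,m}`, with `∗ = m`. -/
def stdToSelfEmbPred {m : ℕ} (hm : 1 ≤ m) : stdObj m ⟶ selfEmb.obj (stdObj (m - 1)) :=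
  ⟨fun x => ⟨x, (selfEmb_obj_stdObj_pred hm).symm ▸ x.2⟩, fun _ _ h => h⟩

theorem stdToSelfEmbPred_comp_apply_of_lt {m : ℕ} (hm : 1 ≤ m) {S : OIcat}
    (h : stdObj (m - 1) ⟶ S) (x : (stdObj m).carrier) (hx : (x : ℕ) < m) :
    ((stdToSelfEmbPred hm ≫ selfEmb.map h).1 x : ℕ) =
      h.1 ⟨x, mem_stdObj.mpr ⟨(mem_stdObj.mp x.2).1, by omega⟩⟩ :=
  embMap_val_mem h _ _

theorem stdToSelfEmbPred_comp_apply_top {m : ℕ} (hm : 1 ≤ m) {S : OIcat}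
    (h : stdObj (m - 1) ⟶ S) :
    ((stdToSelfEmbPred hm ≫ selfEmb.map h).1 (stdTop hm) : ℕ) = newPt S :=
  embMap_val_not_mem h _ fun hmem => by
    have : m ≤ m - 1 := (mem_stdObj.mp hmem).2
    omega

theorem stdToSelfEmbPred_comp_selfEmb_map_injective {m : ℕ} (hm : 1 ≤ m) (S : OIcat) :
    Function.Injective fun h : stdObj (m - 1) ⟶ S => stdToSelfEmbPred hm ≫ selfEmb.map h :=
  fun h h' e => hom_ext fun x => by
    have := congrArg (fun f : stdObj m ⟶ selfEmb.obj S => (f.1 ((stdPredToStd m).1 x) : ℕ)) e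
    simp only [stdToSelfEmbPred_comp_apply_of_lt hm _ _ (stdPredToStd_apply_lt x)] at this
    exact this

theorem range_toSelfEmb_comp_selfEmb_map {m : ℕ} (hm : 1 ≤ m) (S : OIcat) :
    Set.range (fun g : stdObj m ⟶ S => toSelfEmb _ ≫ selfEmb.map g) =
      {g | (g.1 (stdTop hm) : ℕ) = newPt S}ᶜ := by
  ext g
  constructor
  · rintro ⟨g, rfl⟩ (htop : _ = _)
    rw [toSelfEmb_comp_selfEmb_map_apply] at htop
    exact newPt_not_mem S (htop ▸ (g.1 _).2)
  · intro (htop : _ ≠ _)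
    have hg : ∀ x, (g.1 x : ℕ) ∈ S.carrier := fun x => by
      by_cases hx : (x : ℕ) = m
      · obtain rfl : x = stdTop hm := Subtype.ext hx
        exact mem_of_mem_selfEmb_of_ne (g.1 _).2 htop
      · exact apply_mem_of_lt g (lt_stdTop hm hx)
    exact ⟨corestrict g hg, toSelfEmb_comp_selfEmb_map_corestrict g hg⟩

theorem range_stdToSelfEmbPred_comp_selfEmb_map {m : ℕ} (hm : 1 ≤ m) (S : OIcat) :
    Set.range (fun h : stdObj (m - 1) ⟶ S => stdToSelfEmbPred hm ≫ selfEmb.map h) =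
      {g | (g.1 (stdTop hm) : ℕ) = newPt S} := by
  ext g
  constructor
  · rintro ⟨h, rfl⟩
    exact stdToSelfEmbPred_comp_apply_top hm h
  · intro (htop : _ = _)
    have hg : ∀ x, ((stdPredToStd m ≫ g).1 x : ℕ) ∈ S.carrier := fun x =>
      apply_mem_of_lt g (lt_stdTop hm (stdPredToStd_apply_lt x).ne)
    refine ⟨corestrict (stdPredToStd m ≫ g) hg, hom_ext fun x => ?_⟩
    by_cases hx : (x : ℕ) < m
    · exact stdToSelfEmbPred_comp_apply_of_lt hm _ x hx
    · obtain rfl : x = stdTop hm :=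
        Subtype.ext (le_antisymm (mem_stdObj.mp x.2).2 (not_lt.mp hx))
      rw [stdToSelfEmbPred_comp_apply_top, htop]

noncomputable def shiftInl (m : ℕ) :
    coyoneda.obj (Opposite.op (stdObj m)) ⟶ selfEmb ⋙ coyoneda.obj (Opposite.op (stdObj m)) :=
  coyonedaEquiv.symm (toSelfEmb (stdObj m))

noncomputable def shiftInr {m : ℕ} (hm : 1 ≤ m) :
    coyoneda.obj (Opposite.op (stdObj (m - 1))) ⟶
      selfEmb ⋙ coyoneda.obj (Opposite.op (stdObj m)) :=
  coyonedaEquiv.symm (stdToSelfEmbPred hm)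

theorem nonempty_isColimit_shiftCofan_app {m : ℕ} (hm : 1 ≤ m) (S : OIcat) :
    Nonempty (IsColimit (BinaryCofan.mk ((shiftInl m).app S) ((shiftInr hm).app S))) := by
  rw [Types.binaryCofan_isColimit_iff]
  refine ⟨toSelfEmb_comp_selfEmb_map_injective _ S,
    stdToSelfEmbPred_comp_selfEmb_map_injective hm S, ?_⟩
  have h := (isCompl_compl (x := {g : stdObj m ⟶ selfEmb.obj S |
    (g.1 (stdTop hm) : ℕ) = newPt S})).symm
  rw [← range_toSelfEmb_comp_selfEmb_map hm, ← range_stdToSelfEmbPred_comp_selfEmb_map hm] at h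
  exact h

end OIcat

theorem shift_of_Pm (k : Type) [Field k] (m : ℕ) (hm : 1 ≤ m) :
    Nonempty ((selfEmb ⋙ Pmod k m) ≅ (Pmod k m ⊞ Pmod k (m - 1))) := by
  have : (ModuleCat.free k).IsLeftAdjoint := (ModuleCat.adj k).isLeftAdjoint
  have hcofan := isColimitBinaryCofanOfIsColimitApp (OIcat.shiftInl m) (OIcat.shiftInr hm)
    fun S => (OIcat.nonempty_isColimit_shiftCofan_app hm S).some
  exact ⟨mapIsoBiprodOfIsColimit
    ((Functor.whiskeringRight _ _ _).obj (ModuleCat.free k)) hcofan⟩
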